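/- arXiv:2110.13302 — 2 statements merged into one kernel-verified Lean document; each statement's English description precedes it below -/
import Mathlib

section
/- Let r = (R_j)_{j≥1} be a generic sequence of radii, c ∈ C(r), j ≥ 1, and N ≥ 1. Let z ∈ ℂ_p with |z| > ϱ, and assume that f_c^{∘n}(z) ∈ {w ∈ ℂ_p : |w| < R_j} \ (B_1 ∪ ⋯ ∪ B_{j−1}) for all 0 ≤ n < N. Then |∂_j f_c^{∘N}(z)| = φ^{∘N}(|z|)·φ^{∘(N−1)}(|z|)/R_j². -/
noncomputable section

/-- `K` is a model of `ℂ_p`, the completion of an algebraic closure of `ℚ_p`: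
it is a complete, algebraically closed, nonarchimedean normed field whose norm
extends the `p`-adic absolute value and in which the algebraic elements over
`ℚ_p` are dense. -/
structure IsCp (p : ℕ) [Fact p.Prime] (K : Type*) [NormedField K] [Algebra ℚ_[p] K] : Prop where
  complete : CompleteSpace K
  norm_extends : ∀ x : ℚ_[p], ‖algebraMap ℚ_[p] K x‖ = ‖x‖
  isAlgClosed : IsAlgClosed K
  dense_algebraic : Dense {x : K | IsAlgebraic ℚ_[p] x}
  isNonarch : ∀ x y : K, ‖x + y‖ ≤ max ‖x‖ ‖y‖

/-- `ϱ = p^{-1/(p-1)}`. -/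
def rho (p : ℕ) : ℝ := (p : ℝ) ^ (-1 / ((p : ℝ) - 1))

/-- `R` is a sequence of radii: strictly increasing (for indices `≥ 1`),
with `R 1 > p`, tending to infinity. -/
def IsRadii (p : ℕ) (R : ℕ → ℝ) : Prop :=
  (∀ j, 1 ≤ j → R j < R (j + 1)) ∧ (p : ℝ) < R 1 ∧
    Filter.Tendsto R Filter.atTop Filter.atTop

/-- The piecewise-monomial map `φ`: for `R_{j-1} < t ≤ R_j` (with `R_0 := 0`),
`φ(t) = p (R_1 ⋯ R_{j-1})⁻¹ t^{p+j-1}`. -/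
def phi (p : ℕ) (R : ℕ → ℝ) (t : ℝ) : ℝ :=
  let j := sInf {j : ℕ | 1 ≤ j ∧ t ≤ R j}
  (p : ℝ) * (∏ i ∈ Finset.Icc 1 (j - 1), R i)⁻¹ * t ^ (p + j - 1)

/-- A generic sequence of radii. -/
def IsGenericRadii (p : ℕ) (R : ℕ → ℝ) : Prop :=
  IsRadii p R ∧ ∀ i j n : ℕ, 1 ≤ i → i < j → 1 ≤ n → (phi p R)^[n] (R i) ≠ R j

/-- Membership in the parameter space `C(r)`: `|c_j| = R_j` for all `j ≥ 1`. -/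
def InC (p : ℕ) [Fact p.Prime] {K : Type*} [NormedField K] (R : ℕ → ℝ) (c : ℕ → K) : Prop :=
  ∀ j, 1 ≤ j → ‖c j‖ = R j

/-- The transcendental entire map `f_c(z) = (z^p/p) ∏_{j ≥ 1} (1 - z/c_j)`. -/
def fc (p : ℕ) {K : Type*} [NormedField K] (c : ℕ → K) (z : K) : K :=
  z ^ p / (p : K) * ∏' j : ℕ, (1 - z / c (j + 1))

/-- The disk `B_0 = {|z| < 1}` for `j = 0`, and `B_j = {|z - c_j| < R_j}` for `j ≥ 1`. -/
def Bset {K : Type*} [NormedField K] (R : ℕ → ℝ) (c : ℕ → K) (j : ℕ) : Set K :=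
  if j = 0 then {z : K | ‖z‖ < 1} else {z : K | ‖z - c j‖ < R j}

/-- The set `A`, complement of all the disks `B_j`, `j ≥ 0`. -/
def Aset {K : Type*} [NormedField K] (R : ℕ → ℝ) (c : ℕ → K) : Set K :=
  (⋃ j, Bset R c j)ᶜ

/-- `n_j`, the minimal `n ≥ 1` with `R_j < φ^{∘(n+1)}(1)`. -/
def nseq (p : ℕ) (R : ℕ → ℝ) (j : ℕ) : ℕ :=
  sInf {n : ℕ | 1 ≤ n ∧ R j < (phi p R)^[n + 1] 1}

/-- `S_j = φ⁻¹(R_j)`. -/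
def Sse (p : ℕ) (R : ℕ → ℝ) (j : ℕ) : ℝ := Function.invFun (phi p R) (R j)

/-- `λ_j = φ(R_j)/R_j`. -/
def lam (p : ℕ) (R : ℕ → ℝ) (j : ℕ) : ℝ := phi p R (R j) / R j

/-- `L_k`: index of the first symbol of the `k`-th block `B_0^{m_k} A^{n_k} B_k^{…}`
of the itinerary `α(m, ℓ)`; `L_1 = 0` and `L_{k+1} = L_k + m_k + n_k + ℓ_{k+1}`. -/
def Lseq (m n l : ℕ → ℕ) : ℕ → ℕ
  | 0 => 0
  | 1 => 0
  | k + 2 => Lseq m n l (k + 1) + m (k + 1) + n (k + 1) + l (k + 2)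

/-- `N_k = L_k + m_k + n_k`, the index of the final symbol `B_k` of the truncated
itinerary `α^{(k)}` (so `α^{(k)}` has length `N_k + 1`). -/
def Nseq (m n l : ℕ → ℕ) (k : ℕ) : ℕ := Lseq m n l k + m k + n k

/-- The symbol (`some 0 = B_0`, `none = A`, `some k = B_k`) at position `i` of the
itinerary `α(m,ℓ) = B_0^{m_1} A^{n_1} B_1^{ℓ_2} B_0^{m_2} A^{n_2} B_2^{ℓ_3} ⋯`. -/
def itin (m n l : ℕ → ℕ) (i : ℕ) : Option ℕ :=
  let k := sSup {k : ℕ | 1 ≤ k ∧ Lseq m n l k ≤ i}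
  if i < Lseq m n l k + m k then some 0
  else if i < Lseq m n l k + m k + n k then none
  else some k

/-- The subset of `ℂ_p` corresponding to a symbol of the alphabet `{A, B_0, B_1, …}`. -/
def symbSet {K : Type*} [NormedField K] (R : ℕ → ℝ) (c : ℕ → K) : Option ℕ → Set K
  | none => Aset R c
  | some j => Bset R c j

/-- Condition (3.2) at `k`: `ϱ⁻¹ R_k p^{-m_k} λ_k^{ℓ_{k+1}} < 1`. -/
def Cond32 (p : ℕ) (R : ℕ → ℝ) (m l : ℕ → ℕ) (k : ℕ) : Prop :=
  (rho p)⁻¹ * R k * ((p : ℝ) ^ m k)⁻¹ * lam p R k ^ l (k + 1) < 1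

/-- Condition (3.3) for `k`: for all `2 ≤ j < k`,
`ε_k < ϱ^{k-j} R_k² (R_{j-1} S_{j-1})⁻¹ λ_{j-1}^{-ℓ_j}`. -/
def Cond33 (p : ℕ) (R : ℕ → ℝ) (ε : ℕ → ℝ) (l : ℕ → ℕ) (k : ℕ) : Prop :=
  ∀ j, 2 ≤ j → j < k →
    ε k < rho p ^ (k - j) * R k ^ 2 * (R (j - 1) * Sse p R (j - 1))⁻¹ *
      (lam p R (j - 1) ^ l j)⁻¹

/-- Condition (3.4) for `k`: for all `2 ≤ j ≤ k`,
`ϱ^{-2} R_{j-1} S_{j-1} λ_{j-1}^{ℓ_j} p^{-m_j} < 1`. -/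
def Cond34 (p : ℕ) (R : ℕ → ℝ) (m l : ℕ → ℕ) (k : ℕ) : Prop :=
  ∀ j, 2 ≤ j → j ≤ k →
    ((rho p) ^ 2)⁻¹ * (R (j - 1) * Sse p R (j - 1)) * lam p R (j - 1) ^ l j *
      ((p : ℝ) ^ m j)⁻¹ < 1

/-- Condition (3.5) at `k`: `p ϱ⁻¹ R_{k+1}² S_k⁻¹ λ_k^{-ℓ_{k+1}} < ε_{k+1}`. -/
def Cond35 (p : ℕ) (R : ℕ → ℝ) (ε : ℕ → ℝ) (l : ℕ → ℕ) (k : ℕ) : Prop :=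
  (p : ℝ) * (rho p)⁻¹ * R (k + 1) ^ 2 * (Sse p R k)⁻¹ * (lam p R k ^ l (k + 1))⁻¹ < ε (k + 1)

/-- `c' ∈ Δ_k(c, ε)`. -/
def InDelta (p : ℕ) [Fact p.Prime] {K : Type*} [NormedField K] (R : ℕ → ℝ) (c : ℕ → K)
    (ε : ℕ → ℝ) (k : ℕ) (c' : ℕ → K) : Prop :=
  InC p R c' ∧ (∀ j, 1 ≤ j → j < k → c' j = c j) ∧ ∀ j, k ≤ j → ‖c' j - c j‖ < ε j

/-- `c' ∈ U_k(c, ε)`. -/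
def InU (p : ℕ) [Fact p.Prime] {K : Type*} [NormedField K] (R : ℕ → ℝ) (c : ℕ → K)
    (k : ℕ) (ε : ℝ) (c' : ℕ → K) : Prop :=
  InC p R c' ∧ ‖c' k - c k‖ < ε ∧ ∀ j, 1 ≤ j → j ≠ k → c' j = c j


/-! Along the orbit, each factor `1 - w / c_i` of `f_c(w)` has absolute value
`max 1 (|w| / R_i)` (in the case `|w| = R_i` because `w ∉ B_i`), so `|f_c(w)| = φ(|w|)`, the
Newton polygon of `f_c`. Moreover no zero of `f_c` is closer to `w` than `0` is, which bounds the
logarithmic derivative: `|f_c'(w)| ≤ |f_c(w)| / |w|`.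

Writing `f_{c(t)}(w) = (1 - w / t) G(w)` with `G` independent of `t`, the chain rule gives
`∂_j f^{n+1}(z) = ∂_j f^n(z) · (…) + w_n G(w_n) / c_j²` with `w_n = f^n(z)`, where the first
term has absolute value at most `|∂_j f^n(z)| φ(|w_n|) / |w_n|`. By induction, using `t < φ(t)`
for `t > ϱ`, `|∂_j f^n(z)| < |w_n|² / R_j²`, so in the ultrametric field the second term alone
determines `|∂_j f^{n+1}(z)| = φ(|w_n|) |w_n| / R_j²`. -/

open Filter Topology Function

lemma tendsto_finsetProd_cofinite_zero {ι : Type*} {g : ι → ℝ} (hg0 : ∀ i, 0 ≤ g i)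
    (hg : Tendsto g cofinite (𝓝 0)) :
    Tendsto (fun s : Finset ι => ∏ i ∈ s, g i) cofinite (𝓝 0) := by
  classical
  obtain ⟨T, hT⟩ : ∃ T : Finset ι, ∀ i ∉ T, g i ≤ 1 :=
    ⟨(eventually_cofinite.1 (hg.eventually (eventually_le_nhds one_pos))).toFinset,
      fun i hi => by simpa using hi⟩
  set C := ∏ i ∈ T, max (g i) 1
  have hC : 0 < C := Finset.prod_pos fun i _ => zero_lt_one.trans_le (le_max_right _ _)
  have hbound : ∀ u : Finset ι, ∏ i ∈ u, g i ≤ C := fun u => calc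
    ∏ i ∈ u, g i ≤ ∏ i ∈ u ∩ T, g i :=
      Finset.prod_le_prod_of_subset_of_le_one Finset.inter_subset_left (fun i _ => hg0 i)
        fun i _ hi => hT i fun h => hi (Finset.mem_inter.2 ⟨‹_›, h⟩)
    _ ≤ ∏ i ∈ u ∩ T, max (g i) 1 :=
      Finset.prod_le_prod (fun i _ => hg0 i) fun i _ => le_max_left _ _
    _ ≤ C := Finset.prod_le_prod_of_subset_of_one_le Finset.inter_subset_right
      (fun i _ => zero_le_one.trans (le_max_right _ _)) fun i _ _ => le_max_right _ _
  refine tendsto_order.2 ⟨fun a ha => Eventually.of_forall fun s => ha.trans_le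
    (Finset.prod_nonneg fun i _ => hg0 i), fun ε hε => ?_⟩
  obtain ⟨E, hE⟩ : ∃ E : Finset ι, ∀ i ∉ E, g i < ε / C :=
    ⟨(eventually_cofinite.1 (hg.eventually (eventually_lt_nhds (div_pos hε hC)))).toFinset,
      fun i hi => by simpa using hi⟩
  -- a product that is not small only involves indices from the finite set `T ∪ E`
  refine eventually_cofinite.2 ((T ∪ E).powerset.finite_toSet.subset fun s hs => ?_)
  rw [Set.mem_ofPred_eq, not_lt] at hs
  rw [Finset.mem_coe, Finset.mem_powerset]
  by_contra hsub
  obtain ⟨i, his, hiTE⟩ := Finset.not_subset.1 hsub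
  rw [Finset.mem_union, not_or] at hiTE
  have := calc ∏ i ∈ s, g i = g i * ∏ i ∈ s.erase i, g i := (Finset.mul_prod_erase s g his).symm
    _ ≤ g i * C := mul_le_mul_of_nonneg_left (hbound _) (hg0 i)
    _ < ε / C * C := mul_lt_mul_of_pos_right (hE i hiTE.2) hC
    _ = ε := div_mul_cancel₀ ε hC.ne'
  linarith

section Ultrametric

variable {K : Type*} [NormedField K] [IsUltrametricDist K] {ι : Type*}

lemma multipliable_one_add_of_tendsto_zero [CompleteSpace K] {a : ι → K}
    (ha : Tendsto a cofinite (𝓝 0)) : Multipliable (1 + a ·) := by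
  refine multipliable_one_add_of_summable_prod
    (NonarchimedeanAddGroup.summable_of_tendsto_cofinite_zero ?_)
  rw [tendsto_zero_iff_norm_tendsto_zero] at ha ⊢
  simpa only [norm_prod] using tendsto_finsetProd_cofinite_zero (fun i => norm_nonneg _) ha

lemma norm_prod_one_add_sub_one_le {s : Finset ι} {a : ι → K} {δ : ℝ} (hδ0 : 0 ≤ δ)
    (hδ1 : δ ≤ 1) (ha : ∀ i ∈ s, ‖a i‖ ≤ δ) : ‖∏ i ∈ s, (1 + a i) - 1‖ ≤ δ := by
  classical
  induction s using Finset.induction_on with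
  | empty => simpa using hδ0
  | insert b s hb ih =>
    have ih := ih fun i hi => ha i (Finset.mem_insert_of_mem hi)
    have hP : ‖∏ i ∈ s, (1 + a i)‖ ≤ 1 := by
      simpa using (IsUltrametricDist.norm_add_le_max (∏ i ∈ s, (1 + a i) - 1) 1).trans
        (max_le (ih.trans hδ1) norm_one.le)
    rw [Finset.prod_insert hb, show (1 + a b) * ∏ i ∈ s, (1 + a i) - 1 =
      (∏ i ∈ s, (1 + a i) - 1) + a b * ∏ i ∈ s, (1 + a i) by ring]
    refine (IsUltrametricDist.norm_add_le_max _ _).trans (max_le ih ?_)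
    rw [norm_mul]
    simpa using mul_le_mul (ha b (Finset.mem_insert_self b s)) hP (norm_nonneg _) hδ0

lemma norm_prod_one_add_sub_one_sub_sum_le {s : Finset ι} {a : ι → K} {δ : ℝ} (hδ0 : 0 ≤ δ)
    (hδ1 : δ ≤ 1) (ha : ∀ i ∈ s, ‖a i‖ ≤ δ) :
    ‖∏ i ∈ s, (1 + a i) - 1 - ∑ i ∈ s, a i‖ ≤ δ ^ 2 := by
  classical
  induction s using Finset.induction_on with
  | empty => simpa using sq_nonneg δ
  | insert b s hb ih =>
    have ha' : ∀ i ∈ s, ‖a i‖ ≤ δ := fun i hi => ha i (Finset.mem_insert_of_mem hi)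
    rw [Finset.prod_insert hb, Finset.sum_insert hb,
      show (1 + a b) * ∏ i ∈ s, (1 + a i) - 1 - (a b + ∑ i ∈ s, a i) =
        (∏ i ∈ s, (1 + a i) - 1 - ∑ i ∈ s, a i) + a b * (∏ i ∈ s, (1 + a i) - 1) by ring]
    refine (IsUltrametricDist.norm_add_le_max _ _).trans (max_le (ih ha') ?_)
    rw [norm_mul, sq]
    exact mul_le_mul (ha b (Finset.mem_insert_self b s))
      (norm_prod_one_add_sub_one_le hδ0 hδ1 ha') (norm_nonneg _) hδ0

lemma norm_tprod_one_add_sub_one_sub_tsum_le {a : ι → K} (hm : Multipliable (1 + a ·))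
    (hs : Summable a) {δ : ℝ} (hδ0 : 0 ≤ δ) (hδ1 : δ ≤ 1) (ha : ∀ i, ‖a i‖ ≤ δ) :
    ‖∏' i, (1 + a i) - 1 - ∑' i, a i‖ ≤ δ ^ 2 :=
  le_of_tendsto ((hm.hasProd.sub_const 1).sub hs.hasSum).norm <| Eventually.of_forall fun _ =>
    norm_prod_one_add_sub_one_sub_sum_le hδ0 hδ1 fun i _ => ha i

lemma norm_mul_add_mul_le_div {a b a' b' : K} {m : ℝ} (ha : ‖a'‖ ≤ ‖a‖ / m)
    (hb : ‖b'‖ ≤ ‖b‖ / m) : ‖a' * b + a * b'‖ ≤ ‖a * b‖ / m := by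
  refine (IsUltrametricDist.norm_add_le_max _ _).trans (max_le ?_ ?_) <;> rw [norm_mul, norm_mul]
  · calc ‖a'‖ * ‖b‖ ≤ ‖a‖ / m * ‖b‖ := mul_le_mul_of_nonneg_right ha (norm_nonneg b)
      _ = ‖a‖ * ‖b‖ / m := div_mul_eq_mul_div _ _ _
  · calc ‖a‖ * ‖b'‖ ≤ ‖a‖ * (‖b‖ / m) := mul_le_mul_of_nonneg_left hb (norm_nonneg a)
      _ = ‖a‖ * ‖b‖ / m := mul_div_assoc' _ _ _

lemma norm_natCast_mul_pow_pred_le (n : ℕ) {w : K} (hw : w ≠ 0) :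
    ‖(n : K) * w ^ (n - 1)‖ ≤ ‖w ^ n‖ / ‖w‖ := by
  rcases n.eq_zero_or_pos with rfl | hn
  · simp
  calc ‖(n : K) * w ^ (n - 1)‖ = ‖(n : K)‖ * ‖w‖ ^ (n - 1) := by rw [norm_mul, norm_pow]
    _ ≤ ‖w‖ ^ (n - 1) :=
      mul_le_of_le_one_left (by positivity) (IsUltrametricDist.norm_natCast_le_one K n)
    _ = ‖w ^ n‖ / ‖w‖ := by
      rw [norm_pow, eq_div_iff (norm_ne_zero_iff.2 hw), ← pow_succ, Nat.sub_add_cancel hn]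

end Ultrametric

section UltrametricDeriv

open Asymptotics

variable {K : Type*} [NontriviallyNormedField K] [IsUltrametricDist K] [CompleteSpace K]
  {ι : Type*}

lemma hasDerivAt_tprod_one_add_mul {b : ι → K} (hb : Tendsto b cofinite (𝓝 0)) :
    HasDerivAt (fun x => ∏' i, (1 + x * b i)) (∑' i, b i) 0 := by
  obtain ⟨β, hβ⟩ := isBounded_iff_forall_norm_le.1 (Metric.isBounded_range_of_tendsto_cofinite hb)
  have hβ' : ∀ i, ‖b i‖ ≤ max β 1 := fun i => (hβ _ (Set.mem_range_self i)).trans (le_max_left _ _)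
  have hβ1 : 0 < max β 1 := zero_lt_one.trans_le (le_max_right _ _)
  rw [hasDerivAt_iff_isLittleO]
  simp only [zero_mul, add_zero, tprod_one, sub_zero, smul_eq_mul]
  refine IsBigO.trans_isLittleO (g := fun x : K => x ^ 2) ?_ (isLittleO_pow_id one_lt_two)
  refine IsBigO.of_bound (max β 1 ^ 2) ?_
  filter_upwards [Metric.ball_mem_nhds (0 : K) (inv_pos.2 hβ1)] with x hx
  rw [mem_ball_zero_iff] at hx
  have hxβ : ∀ i, ‖x * b i‖ ≤ ‖x‖ * max β 1 := fun i => by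
    rw [norm_mul]; exact mul_le_mul_of_nonneg_left (hβ' i) (norm_nonneg x)
  have hδ1 : ‖x‖ * max β 1 ≤ 1 := by
    rw [← le_div_iff₀ hβ1, one_div]; exact hx.le
  have hm : Multipliable (1 + x * b ·) :=
    multipliable_one_add_of_tendsto_zero (by simpa using hb.const_mul x)
  have hs : Summable b := NonarchimedeanAddGroup.summable_of_tendsto_cofinite_zero hb
  have := norm_tprod_one_add_sub_one_sub_tsum_le hm (hs.mul_left x) (by positivity) hδ1 hxβ
  rw [tsum_mul_left] at this
  rw [norm_pow]
  linarith [show (‖x‖ * max β 1) ^ 2 = max β 1 ^ 2 * ‖x‖ ^ 2 by ring]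

lemma hasDerivAt_tprod_one_sub_mul {e : ι → K} (he : Tendsto e cofinite (𝓝 0)) {w₀ : K}
    (hne : ∀ i, 1 - w₀ * e i ≠ 0) :
    HasDerivAt (fun w => ∏' i, (1 - w * e i))
      (-((∏' i, (1 - w₀ * e i)) * ∑' i, e i / (1 - w₀ * e i))) w₀ := by
  obtain ⟨b, hbdef⟩ : ∃ b : ι → K, b = fun i => e i / (1 - w₀ * e i) := ⟨_, rfl⟩
  have hcancel : ∀ i, (1 - w₀ * e i) * b i = e i := fun i => by
    rw [hbdef]; exact mul_div_cancel₀ (e i) (hne i)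
  have hb : Tendsto b cofinite (𝓝 0) := by
    rw [hbdef]
    have := he.div (tendsto_const_nhds.sub (he.const_mul w₀)) (by simp : (1 : K) - w₀ * 0 ≠ 0)
    rwa [mul_zero, sub_zero, zero_div] at this
  have hmul : ∀ w : K, Multipliable (1 - w * e ·) := fun w => by
    simpa [sub_eq_add_neg] using multipliable_one_add_of_tendsto_zero
      (a := fun i => -(w * e i)) (by simpa using (he.const_mul w).neg)
  -- `1 - w e_i = (1 - w₀ e_i) (1 + (w₀ - w) b_i)` reduces everything to the expansion at `0`
  have hfactor : ∀ w, ∏' i, (1 - w * e i) =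
      (∏' i, (1 - w₀ * e i)) * ∏' i, (1 + (w₀ - w) * b i) := fun w => by
    rw [← (hmul w₀).tprod_mul (multipliable_one_add_of_tendsto_zero
      (by simpa using hb.const_mul (w₀ - w)))]
    refine tprod_congr fun i => ?_
    linear_combination (w - w₀) * hcancel i
  have hshift : HasDerivAt (fun w => ∏' i, (1 + (w₀ - w) * b i)) ((∑' i, b i) * -1) w₀ := by
    have := hasDerivAt_tprod_one_add_mul hb
    rw [← sub_self w₀] at this
    exact this.comp w₀ ((hasDerivAt_id w₀).const_sub w₀)
  subst hbdef
  simpa [funext hfactor, mul_neg] using hshift.const_mul (∏' i, (1 - w₀ * e i))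

/-- The hypothesis `hroots` says that no zero `1 / e i` is closer to `w₀` than `0` is. -/
lemma exists_hasDerivAt_tprod_one_sub_mul_norm_le {e : ι → K} (he : Tendsto e cofinite (𝓝 0))
    {w₀ : K} (hw₀ : w₀ ≠ 0) (hroots : ∀ i, ‖w₀ * e i‖ ≤ ‖1 - w₀ * e i‖) :
    ∃ L, HasDerivAt (fun w => ∏' i, (1 - w * e i)) L w₀ ∧
      ‖L‖ ≤ ‖∏' i, (1 - w₀ * e i)‖ / ‖w₀‖ := by
  have hne : ∀ i, 1 - w₀ * e i ≠ 0 := fun i h0 => by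
    have := hroots i
    rw [h0, norm_zero, norm_le_zero_iff] at this
    simp [this] at h0
  refine ⟨_, hasDerivAt_tprod_one_sub_mul he hne, ?_⟩
  have hterm : ∀ i, ‖e i / (1 - w₀ * e i)‖ ≤ ‖w₀‖⁻¹ := fun i => by
    rw [norm_div, div_le_iff₀ (norm_pos_iff.2 (hne i)), ← div_eq_inv_mul,
      le_div_iff₀ (norm_pos_iff.2 hw₀), mul_comm, ← norm_mul]
    exact hroots i
  rw [norm_neg, norm_mul, div_eq_mul_inv]
  exact mul_le_mul_of_nonneg_left
    (IsUltrametricDist.norm_tsum_le_of_forall_le_of_nonneg (by positivity) hterm) (norm_nonneg _)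

end UltrametricDeriv

section Phi

variable {p : ℕ} {R : ℕ → ℝ}

lemma IsRadii.pos (hR : IsRadii p R) {i : ℕ} (hi : 1 ≤ i) : 0 < R i := by
  have h1 : 0 < R 1 := (Nat.cast_nonneg p).trans_lt hR.2.1
  induction i, hi using Nat.le_induction with
  | base => exact h1
  | succ i hi ih => exact ih.trans (hR.1 i hi)

lemma IsRadii.lt_of_lt (hR : IsRadii p R) {i k : ℕ} (hi : 1 ≤ i) (hik : i < k) : R i < R k := by
  induction k, hik using Nat.le_induction with
  | base => exact hR.1 i hi
  | succ k hk ih => exact ih.trans (hR.1 k (by omega))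

lemma IsRadii.le_of_le (hR : IsRadii p R) {i k : ℕ} (hi : 1 ≤ i) (hik : i ≤ k) : R i ≤ R k :=
  hik.eq_or_lt.elim (fun h => h ▸ le_rfl) fun h => (hR.lt_of_lt hi h).le

lemma Finset.prod_Icc_one_eq_prod_range {M : Type*} [CommMonoid M] (f : ℕ → M) (n : ℕ) :
    ∏ i ∈ Finset.Icc 1 n, f i = ∏ i ∈ Finset.range n, f (i + 1) := by
  rw [← Finset.Ico_add_one_right_eq_Icc, Finset.prod_Ico_eq_prod_range, Nat.add_sub_cancel]
  simp only [add_comm]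

lemma phi_eq_mul_prod (hR : IsRadii p R) {t : ℝ} {M : ℕ} (hM : t ≤ R (M + 1)) :
    phi p R t = p * t ^ p * ∏ i ∈ Finset.range M, max 1 (t / R (i + 1)) := by
  set k := sInf {j : ℕ | 1 ≤ j ∧ t ≤ R j}
  have hk : 1 ≤ k ∧ t ≤ R k :=
    Nat.sInf_mem (s := {j : ℕ | 1 ≤ j ∧ t ≤ R j}) ⟨M + 1, by omega, hM⟩
  have hkM : k ≤ M + 1 := Nat.sInf_le ⟨by omega, hM⟩
  have hlt : ∀ i, 1 ≤ i → i < k → R i < t := fun i hi hik => by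
    simpa [hi] using Nat.notMem_of_lt_sInf hik
  have hprod : ∏ i ∈ Finset.range M, max 1 (t / R (i + 1)) =
      ∏ i ∈ Finset.range (k - 1), t / R (i + 1) := by
    rw [← Finset.prod_subset (Finset.range_subset_range.2 (by omega : k - 1 ≤ M))]
    · refine Finset.prod_congr rfl fun i hi => max_eq_right ?_
      rw [one_le_div (hR.pos (by omega))]
      exact (hlt (i + 1) (by omega) (by simp at hi; omega)).le
    · intro i _ hi
      refine max_eq_left ((div_le_one (hR.pos (by omega))).2 (hk.2.trans (hR.le_of_le hk.1 ?_)))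
      simp at hi; omega
  rw [hprod, Finset.prod_div_distrib, Finset.prod_const, Finset.card_range,
    ← Finset.prod_Icc_one_eq_prod_range, phi, show p + k - 1 = p + (k - 1) by omega, pow_add]
  ring

lemma phi_pos (hp : 0 < p) (hR : IsRadii p R) {t : ℝ} (ht : 0 < t) : 0 < phi p R t := by
  obtain ⟨M, hM⟩ := (hR.2.2.comp (tendsto_add_atTop_nat 1)).eventually_ge_atTop t |>.exists
  have : (0 : ℝ) < p := by exact_mod_cast hp
  rw [phi_eq_mul_prod hR hM]
  positivity

lemma rho_pos (hp : 1 < p) : 0 < rho p :=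
  Real.rpow_pos_of_pos (by exact_mod_cast (zero_lt_one.trans hp)) _

lemma rho_pow_sub_one (hp : 1 < p) : rho p ^ (p - 1) = (p : ℝ)⁻¹ := by
  have hp1 : ((p - 1 : ℕ) : ℝ) = (p : ℝ) - 1 := by
    rw [Nat.cast_sub hp.le, Nat.cast_one]
  have hne : (p : ℝ) - 1 ≠ 0 := by
    rw [← hp1]; exact_mod_cast (by omega : p - 1 ≠ 0)
  rw [rho, ← Real.rpow_natCast, ← Real.rpow_mul (Nat.cast_nonneg p), hp1,
    div_mul_cancel₀ _ hne, Real.rpow_neg_one]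

lemma lt_phi (hp : 1 < p) (hR : IsRadii p R) {t : ℝ} (ht : rho p < t) : t < phi p R t := by
  obtain ⟨M, hM⟩ := (hR.2.2.comp (tendsto_add_atTop_nat 1)).eventually_ge_atTop t |>.exists
  have ht0 : 0 < t := (rho_pos hp).trans ht
  have hpow : 1 < p * t ^ (p - 1) := by
    have := pow_lt_pow_left₀ ht (rho_pos hp).le (by omega : p - 1 ≠ 0)
    rw [rho_pow_sub_one hp] at this
    have hp0 : (0 : ℝ) < p := by exact_mod_cast (zero_lt_one.trans hp)
    calc (1 : ℝ) = p * (p : ℝ)⁻¹ := (mul_inv_cancel₀ hp0.ne').symm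
      _ < p * t ^ (p - 1) := mul_lt_mul_of_pos_left this hp0
  rw [phi_eq_mul_prod hR hM]
  calc t < p * t ^ (p - 1) * t := lt_mul_of_one_lt_left ht0 hpow
    _ = p * t ^ p := by rw [mul_assoc, ← pow_succ, Nat.sub_add_cancel hp.le]
    _ ≤ p * t ^ p * ∏ i ∈ Finset.range M, max 1 (t / R (i + 1)) :=
      le_mul_of_one_le_right (by positivity) (Finset.one_le_prod fun i _ => le_max_left _ _)

lemma rho_lt_iterate_phi (hp : 1 < p) (hR : IsRadii p R) {t : ℝ} (ht : rho p < t) (n : ℕ) :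
    rho p < (phi p R)^[n] t := by
  induction n with
  | zero => exact ht
  | succ n ih => exact ih.trans (by rw [iterate_succ_apply']; exact lt_phi hp hR ih)

end Phi

lemma IsCp.isUltrametricDist {p : ℕ} [Fact p.Prime] {K : Type*} [NormedField K]
    [Algebra ℚ_[p] K] (hK : IsCp p K) : IsUltrametricDist K :=
  .isUltrametricDist_of_forall_norm_add_le_max_norm hK.isNonarch

lemma IsCp.norm_natCast_self {p : ℕ} [Fact p.Prime] {K : Type*} [NormedField K]
    [Algebra ℚ_[p] K] (hK : IsCp p K) : ‖(p : K)‖ = (p : ℝ)⁻¹ := by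
  rw [← map_natCast (algebraMap ℚ_[p] K), hK.norm_extends, Padic.norm_p]

section Fc

variable {K : Type*} [NormedField K] {p : ℕ} {R : ℕ → ℝ} {c : ℕ → K} {j : ℕ} {w : K}

lemma InC.tendsto_inv [Fact p.Prime] (hR : IsRadii p R) (hc : InC p R c) :
    Tendsto (fun i => (c i)⁻¹) atTop (𝓝 0) := by
  rw [tendsto_zero_iff_norm_tendsto_zero]
  refine (tendsto_inv_atTop_zero.comp hR.2.2).congr' ?_
  filter_upwards [eventually_ge_atTop 1] with i hi
  simp [hc i hi]

lemma tendsto_update_inv (hc : Tendsto (fun i => (c i)⁻¹) atTop (𝓝 0)) (t : K) :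
    Tendsto (fun i => (update c j t i)⁻¹) atTop (𝓝 0) :=
  hc.congr' <| (eventually_ne_atTop j).mono fun i hi => by simp only [update_of_ne hi]

variable [IsUltrametricDist K]

lemma norm_sub_eq_max_of_notMem_Bset [Fact p.Prime] (hR : IsRadii p R) (hc : InC p R c)
    (hj : 1 ≤ j) (hwj : ‖w‖ < R j) (hwB : ∀ i, 1 ≤ i → i < j → w ∉ Bset R c i) {i : ℕ}
    (hi : 1 ≤ i) : ‖w - c i‖ = max ‖w‖ (R i) := by
  have hle : ‖w - c i‖ ≤ max ‖w‖ (R i) := by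
    simpa [sub_eq_add_neg, hc i hi] using IsUltrametricDist.norm_add_le_max w (-c i)
  rcases eq_or_ne ‖w‖ (R i) with h | h
  · have hij : i < j := by
      by_contra! hji
      exact (hwj.trans_le (hR.le_of_le hj hji)).ne h
    have hB := hwB i hi hij
    rw [Bset, if_neg (by omega), Set.mem_ofPred_eq, not_lt] at hB
    rw [h, max_self] at hle ⊢
    exact hle.antisymm hB
  · rw [sub_eq_add_neg, IsUltrametricDist.norm_add_eq_max_of_norm_ne_norm
      (by rwa [norm_neg, hc i hi]), norm_neg, hc i hi]

lemma norm_one_sub_div_of_notMem_Bset [Fact p.Prime] (hR : IsRadii p R) (hc : InC p R c)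
    (hj : 1 ≤ j) (hwj : ‖w‖ < R j) (hwB : ∀ i, 1 ≤ i → i < j → w ∉ Bset R c i) {i : ℕ}
    (hi : 1 ≤ i) : ‖1 - w / c i‖ = max 1 (‖w‖ / R i) := by
  have hRi := hR.pos hi
  have hci : c i ≠ 0 := norm_pos_iff.1 (hc i hi ▸ hRi)
  rw [show 1 - w / c i = -(w - c i) / c i by field_simp; ring, norm_div, norm_neg,
    norm_sub_eq_max_of_notMem_Bset hR hc hj hwj hwB hi, hc i hi, ← max_div_div_right hRi.le,
    div_self hRi.ne', max_comm]

lemma norm_one_sub_div_eq_one [Fact p.Prime] (hR : IsRadii p R) (hc : InC p R c)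
    (hj : 1 ≤ j) (hwj : ‖w‖ < R j) (hwB : ∀ i, 1 ≤ i → i < j → w ∉ Bset R c i) :
    ‖1 - w / c j‖ = 1 := by
  rw [norm_one_sub_div_of_notMem_Bset hR hc hj hwj hwB hj,
    max_eq_left ((div_le_one (hR.pos hj)).2 hwj.le)]

variable [CompleteSpace K]

lemma multipliable_one_sub_div (hc : Tendsto (fun i => (c i)⁻¹) atTop (𝓝 0)) (v : K) :
    Multipliable fun i => 1 - v / c (i + 1) := by
  have := ((hc.comp (tendsto_add_atTop_nat 1)).const_mul v).neg
  rw [mul_zero, neg_zero, ← Nat.cofinite_eq_atTop] at this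
  simpa [sub_eq_add_neg, div_eq_mul_inv] using multipliable_one_add_of_tendsto_zero this

/-- Since `v / 0 = 0`, the parameter `update c j 0` removes the factor `1 - v / c j`. -/
lemma fc_update (hc : Tendsto (fun i => (c i)⁻¹) atTop (𝓝 0)) (hj : 1 ≤ j) (t v : K) :
    fc p (update c j t) v = (1 - v / t) * fc p (update c j 0) v := by
  classical
  have hsplit : ∀ s : K, ∏' i, (1 - v / update c j s (i + 1)) =
      (1 - v / s) * ∏' i, if i = j - 1 then 1 else 1 - v / c (i + 1) := fun s => by
    rw [Multipliable.tprod_eq_mul_tprod_ite' (j - 1)]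
    · simp only [show j - 1 + 1 = j by omega, update_self]
      congr 1
      refine tprod_congr fun i => ?_
      split_ifs with h
      · rfl
      · rw [update_of_ne (by omega)]
    · convert multipliable_one_sub_div (tendsto_update_inv (j := j) hc 0) v using 1
      ext i
      rcases eq_or_ne i (j - 1) with rfl | h
      · simp [show j - 1 + 1 = j by omega]
      · rw [update_of_ne h, update_of_ne (by omega), update_of_ne (by omega)]
  rw [fc, fc, hsplit, hsplit, div_zero, sub_zero, one_mul]
  ring

lemma norm_fc [Fact p.Prime] (hp : ‖(p : K)‖ = (p : ℝ)⁻¹) (hR : IsRadii p R) (hc : InC p R c)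
    (hj : 1 ≤ j) (hwj : ‖w‖ < R j) (hwB : ∀ i, 1 ≤ i → i < j → w ∉ Bset R c i) :
    ‖fc p c w‖ = phi p R ‖w‖ := by
  have hfactor : ∀ i, ‖1 - w / c (i + 1)‖ = max 1 (‖w‖ / R (i + 1)) := fun i =>
    norm_one_sub_div_of_notMem_Bset hR hc hj hwj hwB (by omega)
  have hfinite : ∏' i, max 1 (‖w‖ / R (i + 1)) =
      ∏ i ∈ Finset.range (j - 1), max 1 (‖w‖ / R (i + 1)) := by
    refine tprod_eq_prod fun i hi => max_eq_left ?_
    rw [Finset.mem_range, not_lt] at hi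
    exact (div_le_one (hR.pos (by omega))).2 (hwj.le.trans (hR.le_of_le hj (by omega)))
  rw [fc, norm_mul, norm_div, norm_pow, hp,
    (multipliable_one_sub_div (hc.tendsto_inv hR) w).norm_tprod, tprod_congr hfactor, hfinite,
    phi_eq_mul_prod hR (M := j - 1) (by rw [Nat.sub_add_cancel hj]; exact hwj.le), div_inv_eq_mul]
  ring

lemma norm_fc_update_zero [Fact p.Prime] (hp : ‖(p : K)‖ = (p : ℝ)⁻¹) (hR : IsRadii p R)
    (hc : InC p R c) (hj : 1 ≤ j) (hwj : ‖w‖ < R j)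
    (hwB : ∀ i, 1 ≤ i → i < j → w ∉ Bset R c i) :
    ‖fc p (update c j 0) w‖ = phi p R ‖w‖ := by
  have := fc_update (p := p) (hc.tendsto_inv hR) hj (c j) w
  rw [update_eq_self] at this
  rw [← norm_fc hp hR hc hj hwj hwB, this, norm_mul, norm_one_sub_div_eq_one hR hc hj hwj hwB,
    one_mul]

end Fc

section FcDeriv

variable {K : Type*} [NontriviallyNormedField K] [IsUltrametricDist K] [CompleteSpace K]
  {p : ℕ} {R : ℕ → ℝ} {c : ℕ → K} {j : ℕ}

lemma exists_hasDerivAt_fc_norm_le (hc : Tendsto (fun i => (c i)⁻¹) atTop (𝓝 0)) {w : K}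
    (hw : w ≠ 0) (hroots : ∀ i, ‖w‖ ≤ ‖w - c (i + 1)‖) :
    ∃ L, HasDerivAt (fc p c) L w ∧ ‖L‖ ≤ ‖fc p c w‖ / ‖w‖ := by
  set e := fun i => (c (i + 1))⁻¹
  have he : Tendsto e cofinite (𝓝 0) :=
    Nat.cofinite_eq_atTop ▸ hc.comp (tendsto_add_atTop_nat 1)
  have hroots' : ∀ i, ‖w * e i‖ ≤ ‖1 - w * e i‖ := fun i => by
    by_cases hci : c (i + 1) = 0
    · simp [e, hci]
    rw [show 1 - w * e i = (c (i + 1) - w) * e i by rw [sub_mul, mul_inv_cancel₀ hci],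
      norm_mul, norm_mul, norm_sub_rev]
    exact mul_le_mul_of_nonneg_right (hroots i) (norm_nonneg _)
  obtain ⟨L, hL, hLle⟩ := exists_hasDerivAt_tprod_one_sub_mul_norm_le he hw hroots'
  have hfc : fc p c = fun v => v ^ p / p * ∏' i, (1 - v * e i) := by
    funext v; simp only [fc, e, div_eq_mul_inv]
  rw [hfc]
  refine ⟨_, ((hasDerivAt_pow p w).div_const (p : K)).mul hL, norm_mul_add_mul_le_div ?_ hLle⟩
  rw [norm_div, norm_div, div_right_comm]
  exact div_le_div_of_nonneg_right (norm_natCast_mul_pow_pred_le p hw) (norm_nonneg _)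

lemma hasDerivAt_fc_update_comp (hc : Tendsto (fun i => (c i)⁻¹) atTop (𝓝 0)) (hj : 1 ≤ j)
    (hcj : c j ≠ 0) {h : K → K} {D L : K} (hh : HasDerivAt h D (c j))
    (hL : HasDerivAt (fc p (update c j 0)) L (h (c j))) :
    HasDerivAt (fun t => fc p (update c j t) (h t))
      (D * ((1 - h (c j) / c j) * L - fc p (update c j 0) (h (c j)) / c j) +
        h (c j) * fc p (update c j 0) (h (c j)) / c j ^ 2) (c j) := by
  rw [show (fun t => fc p (update c j t) (h t)) =
      fun t => (1 - h t / t) * fc p (update c j 0) (h t) from funext fun t => fc_update hc hj t (h t)]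
  refine (((hh.div (hasDerivAt_id' (c j)) hcj).const_sub 1).mul (hL.comp (c j) hh)).congr_deriv ?_
  simp only [comp_apply, Pi.div_apply]
  field_simp
  ring

/-- In the derivative from `hasDerivAt_fc_update_comp`, with `G = fc p (update c j 0)`, the term
`w₀ G(w₀) / c_j²` dominates because `‖D‖` is small and `‖G'(w₀)‖ ≤ ‖G(w₀)‖ / ‖w₀‖`. -/
lemma exists_hasDerivAt_fc_update_comp_norm_eq [Fact p.Prime] (hp : ‖(p : K)‖ = (p : ℝ)⁻¹)
    (hR : IsRadii p R) (hc : InC p R c) (hj : 1 ≤ j) {w₀ : K} (hw₀ : w₀ ≠ 0)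
    (hwj : ‖w₀‖ < R j) (hwB : ∀ i, 1 ≤ i → i < j → w₀ ∉ Bset R c i) {h : K → K} {D : K}
    (hh : HasDerivAt h D (c j)) (hh₀ : h (c j) = w₀) (hD : ‖D‖ < ‖w₀‖ ^ 2 / R j ^ 2) :
    ∃ D', HasDerivAt (fun t => fc p (update c j t) (h t)) D' (c j) ∧
      ‖D'‖ = phi p R ‖w₀‖ * ‖w₀‖ / R j ^ 2 := by
  have hcinv := hc.tendsto_inv hR
  have hw₀pos := norm_pos_iff.2 hw₀
  have hφ := phi_pos (Fact.out : p.Prime).pos hR hw₀pos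
  have hG := norm_fc_update_zero hp hR hc hj hwj hwB
  obtain ⟨L, hL, hLle⟩ := exists_hasDerivAt_fc_norm_le (p := p)
    (tendsto_update_inv (j := j) hcinv 0) hw₀ fun i => by
      rcases eq_or_ne (i + 1) j with hij | hij
      · simp [hij]
      · rw [update_of_ne hij, norm_sub_eq_max_of_notMem_Bset hR hc hj hwj hwB (by omega)]
        exact le_max_left _ _
  rw [hG] at hLle
  have hderiv := hasDerivAt_fc_update_comp hcinv hj (norm_pos_iff.1 (hc j hj ▸ hR.pos hj)) hh
    (hh₀ ▸ hL)
  rw [hh₀] at hderiv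
  refine ⟨_, hderiv, ?_⟩
  set G := fc p (update c j 0)
  have hDc : ‖(1 - w₀ / c j) * L - G w₀ / c j‖ ≤ phi p R ‖w₀‖ / ‖w₀‖ := by
    rw [sub_eq_add_neg]
    refine (IsUltrametricDist.norm_add_le_max _ _).trans (max_le ?_ ?_)
    · rwa [norm_mul, norm_one_sub_div_eq_one hR hc hj hwj hwB, one_mul]
    · rw [norm_neg, norm_div, hG, hc j hj]
      exact div_le_div_of_nonneg_left hφ.le hw₀pos hwj.le
  have hDp : ‖w₀ * G w₀ / c j ^ 2‖ = phi p R ‖w₀‖ * ‖w₀‖ / R j ^ 2 := by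
    rw [norm_div, norm_mul, norm_pow, hG, hc j hj, mul_comm]
  have hlt : ‖D * ((1 - w₀ / c j) * L - G w₀ / c j)‖ < ‖w₀ * G w₀ / c j ^ 2‖ := by
    rw [norm_mul, hDp]
    calc ‖D‖ * ‖(1 - w₀ / c j) * L - G w₀ / c j‖ ≤ ‖D‖ * (phi p R ‖w₀‖ / ‖w₀‖) :=
          mul_le_mul_of_nonneg_left hDc (norm_nonneg D)
      _ < ‖w₀‖ ^ 2 / R j ^ 2 * (phi p R ‖w₀‖ / ‖w₀‖) :=
          mul_lt_mul_of_pos_right hD (div_pos hφ hw₀pos)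
      _ = phi p R ‖w₀‖ * ‖w₀‖ / R j ^ 2 := by
          field_simp
  rw [IsUltrametricDist.norm_add_eq_max_of_norm_ne_norm hlt.ne, max_eq_right hlt.le, hDp]

end FcDeriv

section Iterate

variable {K : Type*} [NontriviallyNormedField K] [IsUltrametricDist K] [CompleteSpace K]
  {p : ℕ} [Fact p.Prime] {R : ℕ → ℝ} {c : ℕ → K} {j N : ℕ} {z : K}

lemma norm_iterate_fc (hp : ‖(p : K)‖ = (p : ℝ)⁻¹) (hR : IsRadii p R) (hc : InC p R c)
    (hj : 1 ≤ j) (horb : ∀ n, n < N → ‖(fc p c)^[n] z‖ < R j ∧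
      ∀ i, 1 ≤ i → i < j → (fc p c)^[n] z ∉ Bset R c i) {n : ℕ} (hn : n ≤ N) :
    ‖(fc p c)^[n] z‖ = (phi p R)^[n] ‖z‖ := by
  induction n with
  | zero => rfl
  | succ n ih =>
    rw [iterate_succ_apply', iterate_succ_apply', ← ih (by omega),
      norm_fc hp hR hc hj (horb n (by omega)).1 (horb n (by omega)).2]

lemma exists_hasDerivAt_iterate_fc_update (hp : ‖(p : K)‖ = (p : ℝ)⁻¹) (hR : IsRadii p R)
    (hc : InC p R c) (hj : 1 ≤ j) (hz : rho p < ‖z‖)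
    (horb : ∀ n, n < N → ‖(fc p c)^[n] z‖ < R j ∧
      ∀ i, 1 ≤ i → i < j → (fc p c)^[n] z ∉ Bset R c i) {n : ℕ} (hn : n < N) :
    ∃ D, HasDerivAt (fun t => (fc p (update c j t))^[n + 1] z) D (c j) ∧
      ‖D‖ = (phi p R)^[n + 1] ‖z‖ * (phi p R)^[n] ‖z‖ / R j ^ 2 := by
  have hp1 := (Fact.out : p.Prime).one_lt
  have hRj := hR.pos hj
  have hpos : ∀ n, 0 < (phi p R)^[n] ‖z‖ := fun n =>
    (rho_pos hp1).trans (rho_lt_iterate_phi hp1 hR hz n)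
  have step : ∀ n < N, ∀ D, HasDerivAt (fun t => (fc p (update c j t))^[n] z) D (c j) →
      ‖D‖ < ((phi p R)^[n] ‖z‖) ^ 2 / R j ^ 2 →
      ∃ D', HasDerivAt (fun t => (fc p (update c j t))^[n + 1] z) D' (c j) ∧
        ‖D'‖ = (phi p R)^[n + 1] ‖z‖ * (phi p R)^[n] ‖z‖ / R j ^ 2 := by
    intro n hn D hD hDlt
    have hnorm := norm_iterate_fc hp hR hc hj horb hn.le
    simp only [iterate_succ_apply']
    rw [← hnorm] at hDlt ⊢
    exact exists_hasDerivAt_fc_update_comp_norm_eq hp hR hc hj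
      (norm_pos_iff.1 (hnorm ▸ hpos n)) (horb n hn).1 (horb n hn).2 hD (by simp) hDlt
  induction n with
  | zero =>
    refine step 0 hn 0 (hasDerivAt_const _ _) ?_
    rw [norm_zero]
    exact div_pos (pow_pos (hpos 0) 2) (by positivity)
  | succ n ih =>
    obtain ⟨D, hD, hDn⟩ := ih (by omega)
    refine step (n + 1) hn D hD ?_
    have hgrow := lt_phi hp1 hR (rho_lt_iterate_phi hp1 hR hz n)
    rw [← iterate_succ_apply' (phi p R)] at hgrow
    rw [hDn, sq ((phi p R)^[n + 1] ‖z‖)]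
    exact div_lt_div_of_pos_right (mul_lt_mul_of_pos_left hgrow (hpos _)) (by positivity)

end Iterate

/-- **Corollary 5.5.** If `|z| > ϱ` and the first `N` iterates of `z` under `f_c` stay in
`{|w| < R_j} \ (B_1 ∪ ⋯ ∪ B_{j-1})`, then
`|∂_j f_c^{∘N}(z)| = φ^{∘N}(|z|) φ^{∘(N-1)}(|z|) / R_j²`. -/
theorem partial_deriv_iterate
    (p : ℕ) [Fact p.Prime] (K : Type*) [NontriviallyNormedField K] [Algebra ℚ_[p] K]
    (hK : IsCp p K) (R : ℕ → ℝ) (hR : IsGenericRadii p R)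
    (c : ℕ → K) (hc : InC p R c) (j N : ℕ) (hj : 1 ≤ j) (hN : 1 ≤ N)
    (z : K) (hz : rho p < ‖z‖)
    (horb : ∀ n, n < N → ‖(fc p c)^[n] z‖ < R j ∧
      ∀ i, 1 ≤ i → i < j → (fc p c)^[n] z ∉ Bset R c i) :
    ‖deriv (fun t : K => (fc p (Function.update c j t))^[N] z) (c j)‖ =
      (phi p R)^[N] ‖z‖ * (phi p R)^[N - 1] ‖z‖ / R j ^ 2 := by
  have := hK.complete
  have := hK.isUltrametricDist
  obtain ⟨D, hD, hDn⟩ := exists_hasDerivAt_iterate_fc_update hK.norm_natCast_self hR.1 hc hj hz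
    horb (n := N - 1) (by omega)
  rw [Nat.sub_add_cancel hN] at hD hDn
  rw [hD.deriv, hDn]

end
end

section
/- Let r = (R_j)_{j≥1} be a generic sequence of radii, c ∈ C(r), and let ε = (ε_j)_{j≥2} be a sequence of positive reals with ε_j < R_j for all j and ε_j → 0 as j → ∞. Then for every R > 0 and every δ > 0 there exists K such that for all k ≥ K, all c' ∈ Δ_k(c,ε), and all z ∈ ℂ_p with |z| ≤ R, one has |f_c(z) − f_{c'}(z)| ≤ δ. In other words, sup{ sup_{|z|≤R} |f_c(z) − f_{c'}(z)| : c' ∈ Δ_k(c,ε) } → 0 as k → ∞. -/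
noncomputable section

/-!
In an ultrametric field, `‖∏ aᵢ - ∏ bᵢ‖ ≤ max ‖aᵢ - bᵢ‖` as soon as all factors have norm at most
`1`. For `c' ∈ Δ_k(c, ε)` with `k` large, the factors `1 - z/c_j` and `1 - z/c'_j` of `f_c` and
`f_{c'}` coincide for small `j`, have norm at most `1` once `R_j ≥ |z|`, and differ by
`|z| |c_j - c'_j| / R_j² ≤ R₀ ε_j / R_1²` otherwise. Hence `|f_c(z) - f_{c'}(z)|` is bounded by a
constant independent of `k`, `c'` and `z`, times `sup_{j ≥ k} ε_j`.
-/

open Filter Finset Topology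

section Ultrametric

variable {K : Type*} [NormedField K] [IsUltrametricDist K]

lemma norm_one_sub_le_one {w : K} (hw : ‖w‖ ≤ 1) : ‖1 - w‖ ≤ 1 := by
  rw [sub_eq_add_neg]
  exact (IsUltrametricDist.norm_add_le_max _ _).trans (max_le norm_one.le (by rwa [norm_neg]))

lemma norm_prod_sub_prod_le {ι : Type*} {s : Finset ι} {a b : ι → K} {D : ℝ} (hD : 0 ≤ D)
    (ha : ∀ i ∈ s, ‖a i‖ ≤ 1) (hb : ∀ i ∈ s, ‖b i‖ ≤ 1) (hab : ∀ i ∈ s, ‖a i - b i‖ ≤ D) :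
    ‖∏ i ∈ s, a i - ∏ i ∈ s, b i‖ ≤ D := by
  classical
  induction s using Finset.induction_on with
  | empty => simpa using hD
  | insert i s hi ih =>
    simp only [forall_mem_insert] at ha hb hab
    have hbs : ‖∏ j ∈ s, b j‖ ≤ 1 :=
      (Finset.norm_prod_le _ _).trans (prod_le_one (fun _ _ ↦ norm_nonneg _) hb.2)
    rw [prod_insert hi, prod_insert hi,
      show a i * ∏ j ∈ s, a j - b i * ∏ j ∈ s, b j
        = a i * (∏ j ∈ s, a j - ∏ j ∈ s, b j) + (a i - b i) * ∏ j ∈ s, b j by ring]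
    refine (IsUltrametricDist.norm_add_le_max _ _).trans (max_le ?_ ?_) <;> rw [norm_mul]
    · exact (mul_le_of_le_one_left (norm_nonneg _) ha.1).trans (ih ha.2 hb.2 hab.2)
    · exact (mul_le_of_le_one_right (norm_nonneg _) hbs).trans hab.1

lemma norm_tprod_sub_tprod_le {ι : Type*} {a b : ι → K} {D : ℝ} (hD : 0 ≤ D)
    (ha : Multipliable a) (hb : Multipliable b) (ha₁ : ∀ i, ‖a i‖ ≤ 1) (hb₁ : ∀ i, ‖b i‖ ≤ 1)
    (hab : ∀ i, ‖a i - b i‖ ≤ D) :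
    ‖∏' i, a i - ∏' i, b i‖ ≤ D :=
  le_of_tendsto' (ha.hasProd.sub hb.hasProd).norm fun _ ↦
    norm_prod_sub_prod_le hD (fun i _ ↦ ha₁ i) (fun i _ ↦ hb₁ i) (fun i _ ↦ hab i)

lemma multipliable_of_tendsto_one [CompleteSpace K] {f : ℕ → K} (hf : Tendsto f atTop (𝓝 1)) :
    Multipliable f := by
  obtain ⟨J, hJ⟩ := eventually_atTop.mp (hf.eventually (Metric.closedBall_mem_nhds 1 one_pos))
  have hf₁ : ∀ n, ‖f (n + J)‖ ≤ 1 := fun n ↦ by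
    simpa using norm_one_sub_le_one (w := 1 - f (n + J))
      (by simpa [norm_sub_rev, dist_eq_norm] using hJ (n + J) (Nat.le_add_left J n))
  refine Multipliable.comp_nat_add (k := J) (multipliable_iff_cauchySeq_finset.mpr ?_)
  rw [Metric.cauchySeq_iff']
  intro δ hδ
  obtain ⟨N, hN⟩ := eventually_atTop.mp
    ((hf.comp (tendsto_add_atTop_nat J)).eventually (Metric.closedBall_mem_nhds 1 (half_pos hδ)))
  refine ⟨range N, fun s hs ↦ ?_⟩
  have hhead : ‖∏ n ∈ range N, f (n + J)‖ ≤ 1 :=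
    (Finset.norm_prod_le _ _).trans (prod_le_one (fun _ _ ↦ norm_nonneg _) fun n _ ↦ hf₁ n)
  have htail : ‖∏ n ∈ s \ range N, f (n + J) - ∏ n ∈ s \ range N, (1 : K)‖ ≤ δ / 2 :=
    norm_prod_sub_prod_le (half_pos hδ).le (fun n _ ↦ hf₁ n) (fun _ _ ↦ norm_one.le)
      fun n hn ↦ by simpa [dist_eq_norm] using hN n (by simpa using (mem_sdiff.mp hn).2)
  rw [prod_const_one] at htail
  rw [dist_eq_norm, ← prod_sdiff hs, ← sub_one_mul, norm_mul]
  exact (mul_le_of_le_one_right (norm_nonneg _) hhead).trans_lt (htail.trans_lt (half_lt_self hδ))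

end Ultrametric

lemma tprod_sub_tprod_eq_prod_range_mul {M : Type*} [CommRing M] [TopologicalSpace M]
    [IsTopologicalRing M] [T2Space M] {a b : ℕ → M} {N : ℕ}
    (ha : Multipliable fun n ↦ a (n + N)) (hb : Multipliable fun n ↦ b (n + N))
    (hab : ∀ j < N, a j = b j) :
    ∏' j, a j - ∏' j, b j = (∏ j ∈ range N, a j) * (∏' n, a (n + N) - ∏' n, b (n + N)) := by
  rw [← ha.prod_mul_tprod_nat_mul', ← hb.prod_mul_tprod_nat_mul',
    prod_congr rfl fun j hj ↦ hab j (mem_range.mp hj), mul_sub]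

lemma multipliable_one_sub_div_s18 {K : Type*} [NormedField K] [IsUltrametricDist K] [CompleteSpace K]
    {d : ℕ → K} (hd : Tendsto (‖d ·‖) atTop atTop) (z : K) :
    Multipliable fun n ↦ 1 - z / d n := by
  refine multipliable_of_tendsto_one ?_
  have hzd : Tendsto (fun n ↦ z / d n) atTop (𝓝 0) := by
    rw [tendsto_zero_iff_norm_tendsto_zero]
    simpa [div_eq_mul_inv] using (tendsto_inv_atTop_zero.comp hd).const_mul ‖z‖
  simpa using tendsto_const_nhds.sub hzd

namespace IsRadii

variable {p : ℕ} {R : ℕ → ℝ}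

lemma apply_one_pos (hR : IsRadii p R) : 0 < R 1 :=
  (Nat.cast_nonneg p).trans_lt hR.2.1

lemma apply_one_le (hR : IsRadii p R) {j : ℕ} (hj : 1 ≤ j) : R 1 ≤ R j := by
  induction j, hj using Nat.le_induction with
  | base => exact le_rfl
  | succ j hj ih => exact ih.trans (hR.1 j hj).le

end IsRadii

namespace InC

variable {p : ℕ} [Fact p.Prime] {K : Type*} [NormedField K] {R : ℕ → ℝ} {c c' : ℕ → K}

lemma norm_div (hc : InC p R c) {j : ℕ} (hj : 1 ≤ j) (z : K) : ‖z / c j‖ = ‖z‖ / R j := by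
  rw [_root_.norm_div, hc j hj]

lemma norm_one_sub_div_sub_le (hR : IsRadii p R) (hc : InC p R c) (hc' : InC p R c')
    {j : ℕ} (hj : 1 ≤ j) (z : K) :
    ‖(1 - z / c j) - (1 - z / c' j)‖ ≤ ‖z‖ * ‖c' j - c j‖ / R 1 ^ 2 := by
  have hRj : 0 < R j := hR.apply_one_pos.trans_le (hR.apply_one_le hj)
  have hcj : c j ≠ 0 := norm_pos_iff.mp (hc j hj ▸ hRj)
  have hc'j : c' j ≠ 0 := norm_pos_iff.mp (hc' j hj ▸ hRj)
  rw [show (1 - z / c j) - (1 - z / c' j) = z * (c j - c' j) / (c j * c' j) by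
      field_simp; ring,
    _root_.norm_div, norm_mul, norm_mul, hc j hj, hc' j hj, ← sq, norm_sub_rev]
  have := hR.apply_one_pos
  have := hR.apply_one_le hj
  gcongr

end InC

section Product

variable {p : ℕ} [Fact p.Prime] {K : Type*} [NormedField K] [IsUltrametricDist K]
  [CompleteSpace K] {R : ℕ → ℝ} {c c' : ℕ → K}

lemma InC.multipliable_one_sub_div (hR : IsRadii p R) (hc : InC p R c) (z : K) (N : ℕ) :
    Multipliable fun n ↦ 1 - z / c (n + N + 1) := by
  refine _root_.multipliable_one_sub_div_s18 (d := fun n ↦ c (n + N + 1)) ?_ z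
  exact (hR.2.2.comp (tendsto_add_atTop_nat (N + 1))).congr fun n ↦ (hc _ (by omega)).symm

lemma norm_tprod_one_sub_div_sub_le (hR : IsRadii p R) (hc : InC p R c) (hc' : InC p R c')
    {z : K} {r : ℝ} (hz : ‖z‖ ≤ r) {J : ℕ} (hJ : ∀ j, J < j → r ≤ R j)
    (hhead : ∀ j, 1 ≤ j → j ≤ J → c' j = c j) {η : ℝ} (hη : 0 ≤ η)
    (htail : ∀ j, 1 ≤ j → ‖c' j - c j‖ ≤ η) :
    ‖∏' j, (1 - z / c (j + 1)) - ∏' j, (1 - z / c' (j + 1))‖ ≤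
      (1 + r / R 1) ^ J * (r * η / R 1 ^ 2) := by
  have hR₁ := hR.apply_one_pos
  have hr : 0 ≤ r := (norm_nonneg z).trans hz
  have hsmall : ∀ d : ℕ → K, InC p R d → ∀ n, ‖1 - z / d (n + J + 1)‖ ≤ 1 := fun d hd n ↦
    norm_one_sub_le_one <| by
      rw [hd.norm_div (by omega)]
      exact div_le_one_of_le₀ (hz.trans (hJ _ (by omega)))
        (hR₁.trans_le (hR.apply_one_le (by omega))).le
  rw [tprod_sub_tprod_eq_prod_range_mul (a := fun j ↦ 1 - z / c (j + 1))
    (b := fun j ↦ 1 - z / c' (j + 1)) (hc.multipliable_one_sub_div hR z J)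
    (hc'.multipliable_one_sub_div hR z J) fun j hj ↦ by rw [hhead (j + 1) (by omega) hj], norm_mul]
  refine mul_le_mul ?_ (norm_tprod_sub_tprod_le (by positivity)
    (hc.multipliable_one_sub_div hR z J) (hc'.multipliable_one_sub_div hR z J)
    (hsmall c hc) (hsmall c' hc') fun n ↦ ?_) (norm_nonneg _) (by positivity)
  · calc ‖∏ j ∈ range J, (1 - z / c (j + 1))‖ ≤ ∏ j ∈ range J, ‖1 - z / c (j + 1)‖ :=
          Finset.norm_prod_le _ _
      _ ≤ ∏ _j ∈ range J, (1 + r / R 1) := by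
          refine prod_le_prod (fun _ _ ↦ norm_nonneg _) fun j _ ↦ (norm_sub_le _ _).trans ?_
          rw [norm_one, hc.norm_div (by omega)]
          gcongr
          exact hR.apply_one_le (by omega)
      _ = (1 + r / R 1) ^ J := by rw [prod_const, card_range]
  · refine (hc.norm_one_sub_div_sub_le hR hc' (by omega) z).trans ?_
    gcongr
    exact htail _ (by omega)

end Product

lemma InDelta.norm_sub_le {p : ℕ} [Fact p.Prime] {K : Type*} [NormedField K] {R : ℕ → ℝ}
    {c c' : ℕ → K} {ε : ℕ → ℝ} {k : ℕ} (h : InDelta p R c ε k c') {η : ℝ} (hη : 0 ≤ η)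
    (hεη : ∀ j, k ≤ j → ε j ≤ η) {j : ℕ} (hj : 1 ≤ j) : ‖c' j - c j‖ ≤ η := by
  rcases lt_or_ge j k with hjk | hkj
  · rwa [h.2.1 j hj hjk, sub_self, norm_zero]
  · exact (h.2.2 j hkj).le.trans (hεη j hkj)

lemma IsCp.norm_inv_natCast {p : ℕ} [Fact p.Prime] {K : Type*} [NormedField K]
    [Algebra ℚ_[p] K] (hK : IsCp p K) : ‖(p : K)⁻¹‖ = p := by
  have h := hK.norm_extends p
  rw [map_natCast, Padic.norm_p] at h
  rw [norm_inv, h, inv_inv]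

lemma fc_sub_fc (p : ℕ) {K : Type*} [NormedField K] (c c' : ℕ → K) (z : K) :
    fc p c z - fc p c' z =
      z ^ p * (p : K)⁻¹ * (∏' j, (1 - z / c (j + 1)) - ∏' j, (1 - z / c' (j + 1))) := by
  rw [fc, fc, div_eq_mul_inv, mul_sub]

theorem uniform_convergence_general
    (p : ℕ) [Fact p.Prime] (K : Type*) [NontriviallyNormedField K] [Algebra ℚ_[p] K]
    (hK : IsCp p K) (R : ℕ → ℝ) (hR : IsGenericRadii p R)
    (c : ℕ → K) (hc : InC p R c)
    (ε : ℕ → ℝ)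
    (hε0 : Filter.Tendsto ε Filter.atTop (nhds 0)) :
    ∀ R₀ : ℝ, 0 < R₀ → ∀ δ : ℝ, 0 < δ → ∃ k₁ : ℕ, ∀ k, k₁ ≤ k →
      ∀ c' : ℕ → K, InDelta p R c ε k c' →
        ∀ z : K, ‖z‖ ≤ R₀ → ‖fc p c z - fc p c' z‖ ≤ δ := by
  have := hK.complete
  have := IsUltrametricDist.isUltrametricDist_of_forall_norm_add_le_max_norm hK.isNonarch
  have hRadii := hR.1
  have hR₁ := hRadii.apply_one_pos
  intro R₀ hR₀ δ hδ
  obtain ⟨J, hJ⟩ := eventually_atTop.mp (hRadii.2.2.eventually_ge_atTop R₀)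
  set C := (p : ℝ) * R₀ ^ p * (1 + R₀ / R 1) ^ J * (R₀ / R 1 ^ 2) with hC_def
  have hp : (0 : ℝ) < p := Nat.cast_pos.mpr (Fact.out : p.Prime).pos
  have hC : 0 < C := by positivity
  have hη : 0 < δ / C := div_pos hδ hC
  obtain ⟨k₀, hk₀⟩ := eventually_atTop.mp (hε0.eventually_lt_const hη)
  refine ⟨max (J + 1) k₀, fun k hk c' hc' z hz ↦ ?_⟩
  rw [fc_sub_fc, norm_mul, norm_mul, norm_pow, hK.norm_inv_natCast]
  calc _ ≤ R₀ ^ p * p * ((1 + R₀ / R 1) ^ J * (R₀ * (δ / C) / R 1 ^ 2)) := by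
        gcongr
        exact norm_tprod_one_sub_div_sub_le hRadii hc hc'.1 hz (fun j hj ↦ hJ j hj.le)
          (fun j hj hjJ ↦ hc'.2.1 j hj (by omega)) hη.le
          fun j hj ↦ hc'.norm_sub_le hη.le (fun i hi ↦ (hk₀ i (by omega)).le) hj
    _ = δ := by rw [hC_def]; field_simp

/-- **Lemma 5.8** (uniform convergence on bounded sets). If `ε_j → 0`, then
`sup { sup_{|z| ≤ R₀} |f_c(z) - f_{c'}(z)| : c' ∈ Δ_k(c, ε) } → 0` as `k → ∞`. -/
theorem uniform_convergence
    (p : ℕ) [Fact p.Prime] (K : Type*) [NontriviallyNormedField K] [Algebra ℚ_[p] K]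
    (hK : IsCp p K) (R : ℕ → ℝ) (hR : IsGenericRadii p R)
    (c : ℕ → K) (hc : InC p R c)
    (ε : ℕ → ℝ) (hε : ∀ j, 2 ≤ j → 0 < ε j ∧ ε j < R j)
    (hε0 : Filter.Tendsto ε Filter.atTop (nhds 0)) :
    ∀ R₀ : ℝ, 0 < R₀ → ∀ δ : ℝ, 0 < δ → ∃ k₁ : ℕ, ∀ k, k₁ ≤ k →
      ∀ c' : ℕ → K, InDelta p R c ε k c' →
        ∀ z : K, ‖z‖ ≤ R₀ → ‖fc p c z - fc p c' z‖ ≤ δ :=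
  uniform_convergence_general p K hK R hR c hc ε hε0
end
end
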